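/- Let λ ∈ ℝ with λ ≠ 0 and let v₀,…,v₈ be the D2Q9 velocities, with weights ω₀ = 4/9, ωⱼ = 1/9 for 1 ≤ j ≤ 4, ωⱼ = 1/36 for 5 ≤ j ≤ 8, and sound speed c₀ with c₀² = λ²/3. Set d₀ = −1/4, d_j = 1/2 for 1 ≤ j ≤ 4, d_j = −1 for 5 ≤ j ≤ 8. For every ρ ∈ ℝ and every u = (uˣ, uʸ) ∈ ℝ², the product (fourth order) equilibrium f_j^eq = ρ ωⱼ ( 1 + (u·vⱼ)/c₀² + (u·vⱼ)²/(2c₀⁴) − |u|²/(2c₀²) + (u·vⱼ)³/(6c₀⁶) − |u|²(u·vⱼ)/(2c₀⁴) + d_j (uˣ)²(uʸ)²/c₀⁴ ), 0 ≤ j ≤ 8, has density ρ and momentum ρu: Σⱼ f_j^eq = ρ and Σⱼ vⱼ f_j^eq = ρ u. -/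

import Mathlib

/-!
Test the equilibrium against an arbitrary affine function `a + b vˣ + c vʸ` of the velocity, which
covers the density and both momentum components at once. Writing `t_j = u·v_j`, the D2Q9 weights
reproduce the Maxwellian moments up to order four: against the affine test function, the weighted
moments of `1, t, t², t³` are `a`, `c₀² (b uˣ + c uʸ)`, `a c₀² |u|²`, `3 c₀⁴ |u|² (b uˣ + c uʸ)`,
and the weighted sum of the `d_j` vanishes. Hence the quadratic terms cancel against
`-|u|²/(2c₀²)`, the cubic ones against `-|u|² t/(2c₀⁴)`, and only `ρ (a + b uˣ + c uʸ)` is left.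
-/

/-- x-components of the D2Q9 velocities. -/
def vx (lam : ℝ) : Fin 9 → ℝ := ![0, lam, 0, -lam, 0, lam, -lam, -lam, lam]

/-- y-components of the D2Q9 velocities. -/
def vy (lam : ℝ) : Fin 9 → ℝ := ![0, 0, lam, 0, -lam, lam, lam, -lam, -lam]

/-- The D2Q9 weights. -/
noncomputable def w : Fin 9 → ℝ :=
  ![4/9, 1/9, 1/9, 1/9, 1/9, 1/36, 1/36, 1/36, 1/36]

/-- The coefficients `d_j` of the product equilibrium. -/
noncomputable def dcoef : Fin 9 → ℝ :=
  ![-1/4, 1/2, 1/2, 1/2, 1/2, -1, -1, -1, -1]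

theorem sum_mul_equilibrium_eq_moments {ι : Type*} [Fintype ι] (g w t d : ι → ℝ) (ρ c x y : ℝ) :
    ∑ j, g j * (ρ * w j * (1 + t j / c ^ 2 + t j ^ 2 / (2 * c ^ 4) - (x ^ 2 + y ^ 2) / (2 * c ^ 2)
      + t j ^ 3 / (6 * c ^ 6) - (x ^ 2 + y ^ 2) * t j / (2 * c ^ 4) + d j * x ^ 2 * y ^ 2 / c ^ 4)) =
    ρ * (∑ j, g j * w j + (∑ j, g j * w j * t j) / c ^ 2 + (∑ j, g j * w j * t j ^ 2) / (2 * c ^ 4)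
      - (x ^ 2 + y ^ 2) * (∑ j, g j * w j) / (2 * c ^ 2) + (∑ j, g j * w j * t j ^ 3) / (6 * c ^ 6)
      - (x ^ 2 + y ^ 2) * (∑ j, g j * w j * t j) / (2 * c ^ 4)
      + x ^ 2 * y ^ 2 * (∑ j, g j * w j * d j) / c ^ 4) := by
  simp only [Finset.mul_sum, Finset.sum_div, ← Finset.sum_add_distrib, ← Finset.sum_sub_distrib]
  exact Finset.sum_congr rfl fun j _ => by ring

namespace D2Q9

variable (lam c0 : ℝ) (u : ℝ × ℝ) (a b c : ℝ)

theorem sum_affine_mul_w : ∑ j, (a + b * vx lam j + c * vy lam j) * w j = a := by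
  simp [Fin.sum_univ_succ, vx, vy, w]; ring

theorem sum_affine_mul_w_mul_dot :
    ∑ j, (a + b * vx lam j + c * vy lam j) * w j * (u.1 * vx lam j + u.2 * vy lam j) =
      lam ^ 2 / 3 * (b * u.1 + c * u.2) := by
  simp [Fin.sum_univ_succ, vx, vy, w]; ring

theorem sum_affine_mul_w_mul_dot_sq :
    ∑ j, (a + b * vx lam j + c * vy lam j) * w j * (u.1 * vx lam j + u.2 * vy lam j) ^ 2 =
      a * lam ^ 2 / 3 * (u.1 ^ 2 + u.2 ^ 2) := by
  simp [Fin.sum_univ_succ, vx, vy, w]; ring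

theorem sum_affine_mul_w_mul_dot_cube :
    ∑ j, (a + b * vx lam j + c * vy lam j) * w j * (u.1 * vx lam j + u.2 * vy lam j) ^ 3 =
      lam ^ 4 / 3 * (u.1 ^ 2 + u.2 ^ 2) * (b * u.1 + c * u.2) := by
  simp [Fin.sum_univ_succ, vx, vy, w]; ring

theorem sum_affine_mul_w_mul_dcoef :
    ∑ j, (a + b * vx lam j + c * vy lam j) * w j * dcoef j = 0 := by
  simp [Fin.sum_univ_succ, vx, vy, w, dcoef]; ring

theorem sum_affine_mul_productEquilibrium (hlam : lam ≠ 0) (hc0 : c0 ^ 2 = lam ^ 2 / 3) (ρ : ℝ)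
    (feq : Fin 9 → ℝ)
    (hfeq : ∀ j, feq j = ρ * w j *
      (1 + (u.1 * vx lam j + u.2 * vy lam j) / c0 ^ 2
        + (u.1 * vx lam j + u.2 * vy lam j) ^ 2 / (2 * c0 ^ 4)
        - (u.1 ^ 2 + u.2 ^ 2) / (2 * c0 ^ 2)
        + (u.1 * vx lam j + u.2 * vy lam j) ^ 3 / (6 * c0 ^ 6)
        - (u.1 ^ 2 + u.2 ^ 2) * (u.1 * vx lam j + u.2 * vy lam j) / (2 * c0 ^ 4)
        + dcoef j * u.1 ^ 2 * u.2 ^ 2 / c0 ^ 4)) :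
    ∑ j, (a + b * vx lam j + c * vy lam j) * feq j = ρ * (a + b * u.1 + c * u.2) := by
  have hc0_ne : c0 ≠ 0 := by rintro rfl; exact hlam (by simpa using hc0.symm)
  have hlam_sq : lam ^ 2 = 3 * c0 ^ 2 := by linarith
  simp only [hfeq]
  rw [sum_mul_equilibrium_eq_moments, sum_affine_mul_w, sum_affine_mul_w_mul_dot,
    sum_affine_mul_w_mul_dot_sq, sum_affine_mul_w_mul_dot_cube, sum_affine_mul_w_mul_dcoef,
    show lam ^ 4 = (lam ^ 2) ^ 2 by ring, hlam_sq]
  field_simp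
  ring

end D2Q9

/-- The product (fourth order) equilibrium of the D2Q9 cascaded scheme has
density `ρ` and momentum `ρ u`. -/
theorem stmt_13 (lam : ℝ) (hlam : lam ≠ 0) (c0 : ℝ) (hc0 : c0 ^ 2 = lam ^ 2 / 3)
    (ρ : ℝ) (u : ℝ × ℝ)
    (feq : Fin 9 → ℝ)
    (hfeq : ∀ j, feq j = ρ * w j *
      (1 + (u.1 * vx lam j + u.2 * vy lam j) / c0 ^ 2
        + (u.1 * vx lam j + u.2 * vy lam j) ^ 2 / (2 * c0 ^ 4)
        - (u.1 ^ 2 + u.2 ^ 2) / (2 * c0 ^ 2)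
        + (u.1 * vx lam j + u.2 * vy lam j) ^ 3 / (6 * c0 ^ 6)
        - (u.1 ^ 2 + u.2 ^ 2) * (u.1 * vx lam j + u.2 * vy lam j) / (2 * c0 ^ 4)
        + dcoef j * u.1 ^ 2 * u.2 ^ 2 / c0 ^ 4)) :
    (∑ j, feq j = ρ) ∧
    (∑ j, vx lam j * feq j = ρ * u.1) ∧
    (∑ j, vy lam j * feq j = ρ * u.2) := by
  have moment a b c := D2Q9.sum_affine_mul_productEquilibrium lam c0 u a b c hlam hc0 ρ feq hfeq
  refine ⟨?_, ?_, ?_⟩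
  · simpa using moment 1 0 0
  · simpa using moment 0 1 0
  · simpa using moment 0 0 1
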